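/- (Realisation merging) Let J be one of JIK, JIKt, JIK4, JIS4, let A be a properly annotated intuitionistic modal formula, and let r₁, r₂ be realisation functions on A. Then there exist a realisation function r on A and a substitution σ with domain contained in the negatively-annotated variables of A, introducing no new variables, such that: (1) for every positive subformula X of A, J proves (X^{r₁})σ → (X^{r₂})σ → X^r; and (2) for every negative subformula X of A and each i∈{1,2}, J proves X^r → (X^{rᵢ})σ. -/

import Mathlib

/-!
The merged realisation `r` puts `c·(r₁ m)σ + c·(r₂ m)σ` at each positive `□ₘ C` (and the union
`c·(r₁ m)σ ⊔ c·(r₂ m)σ` at each positive `◇ₘ C`), while `σ` sends the variable `xₙ` of a negative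
`□_{4n+1} B` to `c·xₙ` (and `aₖ` of `◇_{4k+3} B` to `c·aₖ`). Here `c` is a ground term determined
by the shape of the scope alone, and by induction on subformulas it justifies `(X^{rᵢ})σ → X^r` for
positive and `X^r → (X^{rᵢ})σ` for negative `X`, for both `i`: connectives are handled by
propositional monotonicity combinators, a modality by `jk1`/`jk2` applied to the internalised
derivation for its scope, followed at positive occurrences by the sum (union) axiom selecting the
`i`-th summand. Since `σ` only applies ground terms to variables, it introduces no new variables,
and the restriction on satisfier variables passes from `r₁`, `r₂` to `r`.
-/

namespace JIKPaper

-- Proof terms and satisfiers for intuitionistic justification logic.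
mutual
inductive PrfTm : Type
  | pvar : Nat → PrfTm
  | pconst : Nat → PrfTm
  | sum : PrfTm → PrfTm → PrfTm
  | app : PrfTm → PrfTm → PrfTm
  | upd : SatTm → PrfTm → PrfTm
  | bang : PrfTm → PrfTm
inductive SatTm : Type
  | svar : Nat → SatTm
  | uni : SatTm → SatTm → SatTm
  | prop : PrfTm → SatTm → SatTm
end

/-- Justification formulas. -/
inductive JForm : Type
  | bot : JForm
  | atom : Nat → JForm
  | and : JForm → JForm → JForm
  | or : JForm → JForm → JForm
  | impl : JForm → JForm → JForm
  | jst : PrfTm → JForm → JForm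
  | sat : SatTm → JForm → JForm

/-- Intuitionistic modal formulas. -/
inductive MForm : Type
  | bot : MForm
  | atom : Nat → MForm
  | and : MForm → MForm → MForm
  | or : MForm → MForm → MForm
  | impl : MForm → MForm → MForm
  | box : MForm → MForm
  | dia : MForm → MForm

/-- Axiom instances of the justification logics JIK (false,false), JIKt (true,false),
JIK4 (false,true), JIS4 (true,true): intuitionistic propositional axioms, jk1–jk5,
sum axioms, and optionally the jt and j4 axioms. -/
inductive JAx : Bool → Bool → JForm → Prop
  | ax1 {hT h4 : Bool} {A B : JForm} : JAx hT h4 (A.impl (B.impl A))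
  | ax2 {hT h4 : Bool} {A B C : JForm} :
      JAx hT h4 ((A.impl (B.impl C)).impl ((A.impl B).impl (A.impl C)))
  | andI {hT h4 : Bool} {A B : JForm} : JAx hT h4 (A.impl (B.impl (A.and B)))
  | andE1 {hT h4 : Bool} {A B : JForm} : JAx hT h4 ((A.and B).impl A)
  | andE2 {hT h4 : Bool} {A B : JForm} : JAx hT h4 ((A.and B).impl B)
  | orI1 {hT h4 : Bool} {A B : JForm} : JAx hT h4 (A.impl (A.or B))
  | orI2 {hT h4 : Bool} {A B : JForm} : JAx hT h4 (B.impl (A.or B))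
  | orE {hT h4 : Bool} {A B C : JForm} :
      JAx hT h4 ((A.impl C).impl ((B.impl C).impl ((A.or B).impl C)))
  | exf {hT h4 : Bool} {A : JForm} : JAx hT h4 (JForm.bot.impl A)
  | jk1 {hT h4 : Bool} {s t : PrfTm} {A B : JForm} :
      JAx hT h4 ((JForm.jst s (A.impl B)).impl
        ((JForm.jst t A).impl (JForm.jst (PrfTm.app s t) B)))
  | jk2 {hT h4 : Bool} {s : PrfTm} {μ : SatTm} {A B : JForm} :
      JAx hT h4 ((JForm.jst s (A.impl B)).impl
        ((JForm.sat μ A).impl (JForm.sat (SatTm.prop s μ) B)))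
  | jk3 {hT h4 : Bool} {μ : SatTm} {A B : JForm} :
      JAx hT h4 ((JForm.sat μ (A.or B)).impl ((JForm.sat μ A).or (JForm.sat μ B)))
  | jk4 {hT h4 : Bool} {μ : SatTm} {t : PrfTm} {A B : JForm} :
      JAx hT h4 (((JForm.sat μ A).impl (JForm.jst t B)).impl
        (JForm.jst (PrfTm.upd μ t) (A.impl B)))
  | jk5 {hT h4 : Bool} {μ : SatTm} :
      JAx hT h4 ((JForm.sat μ JForm.bot).impl JForm.bot)
  | sum1 {hT h4 : Bool} {s t : PrfTm} {A : JForm} :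
      JAx hT h4 ((JForm.jst s A).impl (JForm.jst (PrfTm.sum s t) A))
  | sum2 {hT h4 : Bool} {s t : PrfTm} {A : JForm} :
      JAx hT h4 ((JForm.jst t A).impl (JForm.jst (PrfTm.sum s t) A))
  | uni1 {hT h4 : Bool} {μ ν : SatTm} {A : JForm} :
      JAx hT h4 ((JForm.sat μ A).impl (JForm.sat (SatTm.uni μ ν) A))
  | uni2 {hT h4 : Bool} {μ ν : SatTm} {A : JForm} :
      JAx hT h4 ((JForm.sat ν A).impl (JForm.sat (SatTm.uni μ ν) A))
  | jtBox {h4 : Bool} {t : PrfTm} {A : JForm} : JAx true h4 ((JForm.jst t A).impl A)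
  | jtDia {h4 : Bool} {μ : SatTm} {A : JForm} : JAx true h4 (A.impl (JForm.sat μ A))
  | j4Box {hT : Bool} {t : PrfTm} {A : JForm} :
      JAx hT true ((JForm.jst t A).impl (JForm.jst (PrfTm.bang t) (JForm.jst t A)))
  | j4Dia {hT : Bool} {μ ν : SatTm} {A : JForm} :
      JAx hT true ((JForm.sat μ (JForm.sat ν A)).impl (JForm.sat ν A))

/-- `cₙ:⋯:c₁:A` for a list of constants. -/
def canChain (cs : List Nat) (A : JForm) : JForm :=
  cs.foldr (fun c B => JForm.jst (PrfTm.pconst c) B) A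

/-- Theorems of the justification logic: closure of the axioms under modus ponens and
the constant axiom necessitation rule (with the empty chain giving the axioms). -/
inductive JThm (hT h4 : Bool) : JForm → Prop
  | can {A : JForm} (cs : List Nat) : JAx hT h4 A → JThm hT h4 (canChain cs A)
  | mp {A B : JForm} : JThm hT h4 (A.impl B) → JThm hT h4 A → JThm hT h4 B

/-- Axiom instances of IK (false,false), IKt (true,false), IK4 (false,true), IS4 (true,true). -/
inductive MAx : Bool → Bool → MForm → Prop
  | ax1 {hT h4 : Bool} {A B : MForm} : MAx hT h4 (A.impl (B.impl A))
  | ax2 {hT h4 : Bool} {A B C : MForm} :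
      MAx hT h4 ((A.impl (B.impl C)).impl ((A.impl B).impl (A.impl C)))
  | andI {hT h4 : Bool} {A B : MForm} : MAx hT h4 (A.impl (B.impl (A.and B)))
  | andE1 {hT h4 : Bool} {A B : MForm} : MAx hT h4 ((A.and B).impl A)
  | andE2 {hT h4 : Bool} {A B : MForm} : MAx hT h4 ((A.and B).impl B)
  | orI1 {hT h4 : Bool} {A B : MForm} : MAx hT h4 (A.impl (A.or B))
  | orI2 {hT h4 : Bool} {A B : MForm} : MAx hT h4 (B.impl (A.or B))
  | orE {hT h4 : Bool} {A B C : MForm} :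
      MAx hT h4 ((A.impl C).impl ((B.impl C).impl ((A.or B).impl C)))
  | exf {hT h4 : Bool} {A : MForm} : MAx hT h4 (MForm.bot.impl A)
  | k1 {hT h4 : Bool} {A B : MForm} :
      MAx hT h4 ((A.impl B).box.impl (A.box.impl B.box))
  | k2 {hT h4 : Bool} {A B : MForm} :
      MAx hT h4 ((A.impl B).box.impl (A.dia.impl B.dia))
  | k3 {hT h4 : Bool} {A B : MForm} :
      MAx hT h4 ((A.or B).dia.impl (A.dia.or B.dia))
  | k4 {hT h4 : Bool} {A B : MForm} :
      MAx hT h4 ((A.dia.impl B.box).impl (A.impl B).box)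
  | k5 {hT h4 : Bool} : MAx hT h4 (MForm.bot.dia.impl MForm.bot)
  | tBox {h4 : Bool} {A : MForm} : MAx true h4 (A.box.impl A)
  | tDia {h4 : Bool} {A : MForm} : MAx true h4 (A.impl A.dia)
  | fourBox {hT : Bool} {A : MForm} : MAx hT true (A.box.impl A.box.box)
  | fourDia {hT : Bool} {A : MForm} : MAx hT true (A.dia.dia.impl A.dia)

/-- Theorems of the intuitionistic modal logic: modus ponens and necessitation. -/
inductive MThm (hT h4 : Bool) : MForm → Prop
  | ax {A : MForm} : MAx hT h4 A → MThm hT h4 A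
  | mp {A B : MForm} : MThm hT h4 (A.impl B) → MThm hT h4 A → MThm hT h4 B
  | nec {A : MForm} : MThm hT h4 A → MThm hT h4 A.box

/-- The forgetful projection from justification formulas to modal formulas. -/
def forget : JForm → MForm
  | .bot => .bot
  | .atom n => .atom n
  | .and A B => .and (forget A) (forget B)
  | .or A B => .or (forget A) (forget B)
  | .impl A B => .impl (forget A) (forget B)
  | .jst _ A => .box (forget A)
  | .sat _ A => .dia (forget A)


mutual
def pvarsP : PrfTm → List Nat
  | .pvar n => [n]
  | .pconst _ => []
  | .sum s t => pvarsP s ++ pvarsP t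
  | .app s t => pvarsP s ++ pvarsP t
  | .upd m t => pvarsS m ++ pvarsP t
  | .bang t => pvarsP t
def pvarsS : SatTm → List Nat
  | .svar _ => []
  | .uni m n => pvarsS m ++ pvarsS n
  | .prop t m => pvarsP t ++ pvarsS m
end

mutual
def svarsP : PrfTm → List Nat
  | .pvar _ => []
  | .pconst _ => []
  | .sum s t => svarsP s ++ svarsP t
  | .app s t => svarsP s ++ svarsP t
  | .upd m t => svarsS m ++ svarsP t
  | .bang t => svarsP t
def svarsS : SatTm → List Nat
  | .svar n => [n]
  | .uni m n => svarsS m ++ svarsS n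
  | .prop t m => svarsP t ++ svarsS m
end

def pvarsF : JForm → List Nat
  | .bot => []
  | .atom _ => []
  | .and A B => pvarsF A ++ pvarsF B
  | .or A B => pvarsF A ++ pvarsF B
  | .impl A B => pvarsF A ++ pvarsF B
  | .jst t A => pvarsP t ++ pvarsF A
  | .sat m A => pvarsS m ++ pvarsF A

def svarsF : JForm → List Nat
  | .bot => []
  | .atom _ => []
  | .and A B => svarsF A ++ svarsF B
  | .or A B => svarsF A ++ svarsF B
  | .impl A B => svarsF A ++ svarsF B
  | .jst t A => svarsP t ++ svarsF A
  | .sat m A => svarsS m ++ svarsF A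

mutual
def substP (sp : Nat → PrfTm) (ss : Nat → SatTm) : PrfTm → PrfTm
  | .pvar n => sp n
  | .pconst n => .pconst n
  | .sum s t => .sum (substP sp ss s) (substP sp ss t)
  | .app s t => .app (substP sp ss s) (substP sp ss t)
  | .upd m t => .upd (substS sp ss m) (substP sp ss t)
  | .bang t => .bang (substP sp ss t)
def substS (sp : Nat → PrfTm) (ss : Nat → SatTm) : SatTm → SatTm
  | .svar n => ss n
  | .uni m n => .uni (substS sp ss m) (substS sp ss n)
  | .prop t m => .prop (substP sp ss t) (substS sp ss m)
end

def substF (sp : Nat → PrfTm) (ss : Nat → SatTm) : JForm → JForm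
  | .bot => .bot
  | .atom n => .atom n
  | .and A B => .and (substF sp ss A) (substF sp ss B)
  | .or A B => .or (substF sp ss A) (substF sp ss B)
  | .impl A B => .impl (substF sp ss A) (substF sp ss B)
  | .jst t A => .jst (substP sp ss t) (substF sp ss A)
  | .sat m A => .sat (substS sp ss m) (substF sp ss A)

/-- Annotated intuitionistic modal formulas: each modality carries a natural number index. -/
inductive AForm : Type
  | bot : AForm
  | atom : Nat → AForm
  | and : AForm → AForm → AForm
  | or : AForm → AForm → AForm
  | impl : AForm → AForm → AForm
  | box : Nat → AForm → AForm
  | dia : Nat → AForm → AForm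

/-- Realise an annotated formula: `□ₙB ↦ rp(n):B`, `◇ₙB ↦ rs(n):B`. -/
def realise (rp : Nat → PrfTm) (rs : Nat → SatTm) : AForm → JForm
  | .bot => .bot
  | .atom n => .atom n
  | .and A B => .and (realise rp rs A) (realise rp rs B)
  | .or A B => .or (realise rp rs A) (realise rp rs B)
  | .impl A B => .impl (realise rp rs A) (realise rp rs B)
  | .box n A => .jst (rp n) (realise rp rs A)
  | .dia n A => .sat (rs n) (realise rp rs A)

def annList : AForm → List Nat
  | .bot => []
  | .atom _ => []
  | .and A B => annList A ++ annList B
  | .or A B => annList A ++ annList B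
  | .impl A B => annList A ++ annList B
  | .box n A => n :: annList A
  | .dia n A => n :: annList A

/-- `Sub p X A`: `X` is a subformula of `A` of polarity `p` (`true` = positive). -/
inductive Sub : Bool → AForm → AForm → Prop
  | refl {A : AForm} : Sub true A A
  | andl {p : Bool} {X A B : AForm} : Sub p X A → Sub p X (AForm.and A B)
  | andr {p : Bool} {X A B : AForm} : Sub p X B → Sub p X (AForm.and A B)
  | orl {p : Bool} {X A B : AForm} : Sub p X A → Sub p X (AForm.or A B)
  | orr {p : Bool} {X A B : AForm} : Sub p X B → Sub p X (AForm.or A B)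
  | impll {p : Bool} {X A B : AForm} : Sub p X A → Sub (!p) X (AForm.impl A B)
  | implr {p : Bool} {X A B : AForm} : Sub p X B → Sub p X (AForm.impl A B)
  | box {p : Bool} {X A : AForm} {n : Nat} : Sub p X A → Sub p X (AForm.box n A)
  | dia {p : Bool} {X A : AForm} {n : Nat} : Sub p X A → Sub p X (AForm.dia n A)

/-- Proper annotation: distinct indexes, □ indexed ≡ 0,1 mod 4, ◇ indexed ≡ 2,3 mod 4,
even indexes in positive position and odd in negative position. -/
def ProperlyAnnotated (A : AForm) : Prop :=
  (annList A).Nodup ∧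
  (∀ (p : Bool) (n : Nat) (B : AForm), Sub p (AForm.box n B) A → (n % 4 = 0 ∨ n % 4 = 1)) ∧
  (∀ (p : Bool) (n : Nat) (B : AForm), Sub p (AForm.dia n B) A → (n % 4 = 2 ∨ n % 4 = 3)) ∧
  (∀ (p : Bool) (n : Nat) (B : AForm), Sub p (AForm.box n B) A → (p = true ↔ n % 2 = 0)) ∧
  (∀ (p : Bool) (n : Nat) (B : AForm), Sub p (AForm.dia n B) A → (p = true ↔ n % 2 = 0))

/-- `(rp, rs)` is a realisation function on `A`: indexes `4n+1` go to the n-th proof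
variable, indexes `4n+3` to the n-th satisfier variable, with the satisfier
self-referentiality restriction. -/
def IsRealOn (rp : Nat → PrfTm) (rs : Nat → SatTm) (A : AForm) : Prop :=
  (∀ n : Nat, (4 * n + 1) ∈ annList A → rp (4 * n + 1) = PrfTm.pvar n) ∧
  (∀ n : Nat, (4 * n + 3) ∈ annList A → rs (4 * n + 3) = SatTm.svar n) ∧
  (∀ (p : Bool) (k : Nat) (B : AForm),
    Sub p (AForm.dia (4 * k + 3) B) A → k ∉ svarsF (realise rp rs B))

namespace Sub

theorem trans {p q : Bool} {X Y A : AForm} (hY : Sub q Y X) (hX : Sub p X A) :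
    Sub (q == p) Y A := by
  induction hX with
  | refl => simpa using hY
  | andl _ ih => exact .andl (ih hY)
  | andr _ ih => exact .andr (ih hY)
  | orl _ ih => exact .orl (ih hY)
  | orr _ ih => exact .orr (ih hY)
  | @impll p _ _ _ _ ih =>
    rw [show (q == !p) = !(q == p) by cases q <;> cases p <;> rfl]
    exact .impll (ih hY)
  | implr _ ih => exact .implr (ih hY)
  | box _ ih => exact .box (ih hY)
  | dia _ ih => exact .dia (ih hY)

theorem annList_subset {p : Bool} {X A : AForm} (h : Sub p X A) : annList X ⊆ annList A := by
  induction h <;> simp_all [annList, List.subset_def]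

theorem pvarsF_realise_subset {p : Bool} {X A : AForm} (rp : Nat → PrfTm) (rs : Nat → SatTm)
    (h : Sub p X A) : pvarsF (realise rp rs X) ⊆ pvarsF (realise rp rs A) := by
  induction h <;> simp_all [realise, pvarsF, List.subset_def]

theorem svarsF_realise_subset {p : Bool} {X A : AForm} (rp : Nat → PrfTm) (rs : Nat → SatTm)
    (h : Sub p X A) : svarsF (realise rp rs X) ⊆ svarsF (realise rp rs A) := by
  induction h <;> simp_all [realise, svarsF, List.subset_def]

end Sub

def AForm.outerIndex : AForm → Option Nat
  | .box n _ => some n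
  | .dia n _ => some n
  | _ => none

theorem AForm.mem_annList_of_outerIndex {X : AForm} {n : Nat} (h : X.outerIndex = some n) :
    n ∈ annList X := by
  cases X <;> simp_all [AForm.outerIndex, annList]

theorem Sub.eq_of_outerIndex_eq {p q : Bool} {X Y A : AForm} {n : Nat} (hA : (annList A).Nodup)
    (hX : Sub p X A) (hY : Sub q Y A) (hXn : X.outerIndex = some n)
    (hYn : Y.outerIndex = some n) : X = Y := by
  have mem : ∀ {q Z B}, Sub q Z B → Z.outerIndex = some n → n ∈ annList B :=
    fun h hZ => h.annList_subset (AForm.mem_annList_of_outerIndex hZ)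
  induction A generalizing p q X Y with
  | bot | atom => cases hX; simp [AForm.outerIndex] at hXn
  | and A₁ A₂ ih₁ ih₂ | or A₁ A₂ ih₁ ih₂ | impl A₁ A₂ ih₁ ih₂ =>
    obtain ⟨hA₁, hA₂, hdisj⟩ := List.nodup_append.mp hA
    cases hX <;> cases hY
    all_goals first
      | exact ih₁ hA₁ ‹_› ‹_› hXn hYn
      | exact ih₂ hA₂ ‹_› ‹_› hXn hYn
      | exact absurd rfl (hdisj _ (mem ‹Sub _ X _› hXn) _ (mem ‹Sub _ Y _› hYn))
      | exact absurd rfl (hdisj _ (mem ‹Sub _ Y _› hYn) _ (mem ‹Sub _ X _› hXn))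
      | simp [AForm.outerIndex] at hXn hYn
  | box m A' ih | dia m A' ih =>
    obtain ⟨hm, hA'⟩ := List.nodup_cons.mp hA
    cases hX with
    | refl =>
      cases hY with
      | refl => rfl
      | _ hY => cases Option.some.inj hXn; exact absurd (mem hY hYn) hm
    | _ hX =>
      cases hY with
      | refl => cases Option.some.inj hYn; exact absurd (mem hX hXn) hm
      | _ hY => exact ih hA' hX hY hXn hYn

open Classical in
/-- The scope `B` of the unique occurrence of `M B` in `A`, for `M` one of `AForm.box n`,
`AForm.dia n`. -/
noncomputable def AForm.scope (A : AForm) (M : AForm → AForm) : Option AForm :=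
  if h : ∃ B p, Sub p (M B) A then some h.choose else none

theorem AForm.exists_sub_of_scope_eq_some {A B : AForm} {M : AForm → AForm}
    (h : A.scope M = some B) : ∃ p, Sub p (M B) A := by
  unfold AForm.scope at h
  split_ifs at h with hex
  exact Option.some.inj h ▸ hex.choose_spec

theorem AForm.scope_eq_some {A B : AForm} {M : AForm → AForm} {n : Nat} {p : Bool}
    (hA : (annList A).Nodup) (hM : ∀ C, (M C).outerIndex = some n) (hinj : M.Injective)
    (h : Sub p (M B) A) : A.scope M = some B := by
  have hex : ∃ B p, Sub p (M B) A := ⟨B, p, h⟩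
  obtain ⟨q, hq⟩ := hex.choose_spec
  rw [AForm.scope, dif_pos hex, hinj (hq.eq_of_outerIndex_eq hA h (hM _) (hM _))]

theorem AForm.scope_box_eq {A B : AForm} {n : Nat} {p : Bool} (hA : (annList A).Nodup)
    (h : Sub p (.box n B) A) : A.scope (.box n) = some B :=
  AForm.scope_eq_some hA (fun _ => rfl) (fun _ _ e => (AForm.box.inj e).2) h

theorem AForm.scope_dia_eq {A B : AForm} {n : Nat} {p : Bool} (hA : (annList A).Nodup)
    (h : Sub p (.dia n B) A) : A.scope (.dia n) = some B :=
  AForm.scope_eq_some hA (fun _ => rfl) (fun _ _ e => (AForm.dia.inj e).2) h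

theorem ProperlyAnnotated.box_mod {A B : AForm} {p : Bool} {m : Nat} (hA : ProperlyAnnotated A)
    (h : Sub p (.box m B) A) : m % 4 = if p then 0 else 1 := by
  have h4 := hA.2.1 p m B h
  have h2 := hA.2.2.2.1 p m B h
  cases p <;> simp at h2 ⊢ <;> omega

theorem ProperlyAnnotated.dia_mod {A B : AForm} {p : Bool} {m : Nat} (hA : ProperlyAnnotated A)
    (h : Sub p (.dia m B) A) : m % 4 = if p then 2 else 3 := by
  have h4 := hA.2.2.1 p m B h
  have h2 := hA.2.2.2.2 p m B h
  cases p <;> simp at h2 ⊢ <;> omega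

mutual
theorem mem_svarsP_of_mem_substP {sp : Nat → PrfTm} {ss : Nat → SatTm}
    (hp : ∀ n, svarsP (sp n) = []) (hs : ∀ k, svarsS (ss k) ⊆ [k]) :
    ∀ t {x}, x ∈ svarsP (substP sp ss t) → x ∈ svarsP t
  | .pvar n, _ => by simp [substP, hp]
  | .pconst _, _ => by simp [substP]
  | .sum s t, _ | .app s t, _ => by
    simp only [substP, svarsP, List.mem_append]
    exact Or.imp (mem_svarsP_of_mem_substP hp hs s) (mem_svarsP_of_mem_substP hp hs t)
  | .upd μ t, _ => by
    simp only [substP, svarsP, List.mem_append]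
    exact Or.imp (mem_svarsS_of_mem_substS hp hs μ) (mem_svarsP_of_mem_substP hp hs t)
  | .bang t, _ => mem_svarsP_of_mem_substP hp hs t
theorem mem_svarsS_of_mem_substS {sp : Nat → PrfTm} {ss : Nat → SatTm}
    (hp : ∀ n, svarsP (sp n) = []) (hs : ∀ k, svarsS (ss k) ⊆ [k]) :
    ∀ μ {x}, x ∈ svarsS (substS sp ss μ) → x ∈ svarsS μ
  | .svar k, _ => fun h => hs k h
  | .uni μ ν, _ => by
    simp only [substS, svarsS, List.mem_append]
    exact Or.imp (mem_svarsS_of_mem_substS hp hs μ) (mem_svarsS_of_mem_substS hp hs ν)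
  | .prop t μ, _ => by
    simp only [substS, svarsS, List.mem_append]
    exact Or.imp (mem_svarsP_of_mem_substP hp hs t) (mem_svarsS_of_mem_substS hp hs μ)
end

theorem mem_svarsF_realise_of_mem {rp rp1 rp2 : Nat → PrfTm} {rs rs1 rs2 : Nat → SatTm}
    {B : AForm}
    (hp : ∀ m ∈ annList B, ∀ x ∈ svarsP (rp m), x ∈ svarsP (rp1 m) ∨ x ∈ svarsP (rp2 m))
    (hs : ∀ m ∈ annList B, ∀ x ∈ svarsS (rs m), x ∈ svarsS (rs1 m) ∨ x ∈ svarsS (rs2 m))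
    {x : Nat} (hx : x ∈ svarsF (realise rp rs B)) :
    x ∈ svarsF (realise rp1 rs1 B) ∨ x ∈ svarsF (realise rp2 rs2 B) := by
  induction B <;> simp_all [realise, svarsF, annList] <;> grind

def c₀ : PrfTm := .pconst 0

/-- `JProof hT h4 t A`: `t` internalises a derivation of `A`, every constant necessitation of an
axiom being justified by the one constant `c₀`. -/
inductive JProof (hT h4 : Bool) : PrfTm → JForm → Prop
  | can (cs : List Nat) {A : JForm} : JAx hT h4 A → JProof hT h4 c₀ (canChain cs A)
  | mp {s t : PrfTm} {A B : JForm} :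
      JProof hT h4 s (A.impl B) → JProof hT h4 t A → JProof hT h4 (.app s t) B

def liftTm : PrfTm → PrfTm
  | .app s t => .app (.app c₀ (liftTm s)) (liftTm t)
  | _ => c₀

namespace Comb

def id : PrfTm := .app (.app c₀ c₀) c₀

def comp (s t : PrfTm) : PrfTm := .app (.app c₀ (.app c₀ s)) t

def pair (s t : PrfTm) : PrfTm := .app (.app c₀ (comp c₀ s)) t

def andMono (f g : PrfTm) : PrfTm := pair (comp f c₀) (comp g c₀)

def orMono (f g : PrfTm) : PrfTm := .app (.app c₀ (comp c₀ f)) (comp c₀ g)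

def compose : PrfTm := .app (.app c₀ (.app c₀ c₀)) c₀

def impMono (f g : PrfTm) : PrfTm :=
  comp (.app compose g) (.app (.app c₀ compose) (.app c₀ f))

def mono (c : PrfTm) : PrfTm := .app c₀ (liftTm c)

def sumMono (c : PrfTm) : PrfTm := comp c₀ (mono c)

end Comb

namespace JProof

variable {hT h4 : Bool}

theorem thm {t : PrfTm} {A : JForm} (h : JProof hT h4 t A) : JThm hT h4 A := by
  induction h with
  | can cs h => exact .can cs h
  | mp _ _ ih₁ ih₂ => exact .mp ih₁ ih₂

theorem ax {A : JForm} (h : JAx hT h4 A) : JProof hT h4 c₀ A := .can [] h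

theorem lift {t : PrfTm} {A : JForm} (h : JProof hT h4 t A) :
    JProof hT h4 (liftTm t) (.jst t A) := by
  induction h with
  | can cs h => exact .can (0 :: cs) h
  | mp _ _ ih₁ ih₂ => exact ((ax .jk1).mp ih₁).mp ih₂

theorem imp_refl (A : JForm) : JProof hT h4 Comb.id (A.impl A) :=
  ((ax (.ax2 (B := A.impl A))).mp (ax .ax1)).mp (ax .ax1)

theorem comp {s t : PrfTm} {A B C : JForm} (hs : JProof hT h4 s (B.impl C))
    (ht : JProof hT h4 t (A.impl B)) : JProof hT h4 (Comb.comp s t) (A.impl C) :=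
  ((ax .ax2).mp ((ax .ax1).mp hs)).mp ht

theorem pair {s t : PrfTm} {A B C : JForm} (hs : JProof hT h4 s (C.impl A))
    (ht : JProof hT h4 t (C.impl B)) : JProof hT h4 (Comb.pair s t) (C.impl (A.and B)) :=
  ((ax .ax2).mp ((ax .andI).comp hs)).mp ht

theorem and_mono {f g : PrfTm} {A A' B B' : JForm} (hf : JProof hT h4 f (A.impl A'))
    (hg : JProof hT h4 g (B.impl B')) :
    JProof hT h4 (Comb.andMono f g) ((A.and B).impl (A'.and B')) :=
  pair (hf.comp (ax .andE1)) (hg.comp (ax .andE2))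

theorem or_mono {f g : PrfTm} {A A' B B' : JForm} (hf : JProof hT h4 f (A.impl A'))
    (hg : JProof hT h4 g (B.impl B')) :
    JProof hT h4 (Comb.orMono f g) ((A.or B).impl (A'.or B')) :=
  ((ax .orE).mp ((ax .orI1).comp hf)).mp ((ax .orI2).comp hg)

theorem imp_compose {A B C : JForm} :
    JProof hT h4 Comb.compose ((B.impl C).impl ((A.impl B).impl (A.impl C))) :=
  ((ax .ax2).mp ((ax .ax1).mp (ax .ax2))).mp (ax .ax1)

theorem imp_mono {f g : PrfTm} {A A' B B' : JForm} (hf : JProof hT h4 f (A'.impl A))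
    (hg : JProof hT h4 g (B.impl B')) :
    JProof hT h4 (Comb.impMono f g) ((A.impl B).impl (A'.impl B')) :=
  (imp_compose.mp hg).comp (((ax .ax2).mp imp_compose).mp ((ax .ax1).mp hf))

theorem jst_mono {c : PrfTm} {P Q : JForm} (hc : JProof hT h4 c (P.impl Q)) (t : PrfTm) :
    JProof hT h4 (Comb.mono c) ((JForm.jst t P).impl (.jst (.app c t) Q)) :=
  (ax .jk1).mp hc.lift

theorem sat_mono {c : PrfTm} {P Q : JForm} (hc : JProof hT h4 c (P.impl Q)) (μ : SatTm) :
    JProof hT h4 (Comb.mono c) ((JForm.sat μ P).impl (.sat (.prop c μ) Q)) :=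
  (ax .jk2).mp hc.lift

theorem jst_sum_left {c : PrfTm} {P Q : JForm} (hc : JProof hT h4 c (P.impl Q)) (t u : PrfTm) :
    JProof hT h4 (Comb.sumMono c) ((JForm.jst t P).impl (.jst (.sum (.app c t) u) Q)) :=
  (ax .sum1).comp (hc.jst_mono t)

theorem jst_sum_right {c : PrfTm} {P Q : JForm} (hc : JProof hT h4 c (P.impl Q)) (t u : PrfTm) :
    JProof hT h4 (Comb.sumMono c) ((JForm.jst t P).impl (.jst (.sum u (.app c t)) Q)) :=
  (ax .sum2).comp (hc.jst_mono t)

theorem sat_uni_left {c : PrfTm} {P Q : JForm} (hc : JProof hT h4 c (P.impl Q)) (μ ν : SatTm) :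
    JProof hT h4 (Comb.sumMono c) ((JForm.sat μ P).impl (.sat (.uni (.prop c μ) ν) Q)) :=
  (ax .uni1).comp (hc.sat_mono μ)

theorem sat_uni_right {c : PrfTm} {P Q : JForm} (hc : JProof hT h4 c (P.impl Q)) (μ ν : SatTm) :
    JProof hT h4 (Comb.sumMono c) ((JForm.sat μ P).impl (.sat (.uni ν (.prop c μ)) Q)) :=
  (ax .uni2).comp (hc.sat_mono μ)

end JProof

inductive IsGround : PrfTm → Prop
  | const (n : Nat) : IsGround (.pconst n)
  | app {s t : PrfTm} : IsGround s → IsGround t → IsGround (.app s t)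

theorem IsGround.pvarsP_eq_nil {t : PrfTm} (h : IsGround t) : pvarsP t = [] := by
  induction h <;> simp_all [pvarsP]

theorem IsGround.svarsP_eq_nil {t : PrfTm} (h : IsGround t) : svarsP t = [] := by
  induction h <;> simp_all [svarsP]

theorem isGround_liftTm : ∀ t, IsGround (liftTm t)
  | .app s t => .app (.app (.const 0) (isGround_liftTm s)) (isGround_liftTm t)
  | .pvar _ | .pconst _ | .sum _ _ | .upd _ _ | .bang _ => .const 0

/-- The ground term justifying `(X^{rᵢ})σ → X^r` (polarity `true`) or `X^r → (X^{rᵢ})σ`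
(polarity `false`) for both `i`. It mentions neither the realisations nor `σ`, which is what
lets it enter the definitions of `r` and `σ` below. -/
def mergeTm : Bool → AForm → PrfTm
  | _, .bot | _, .atom _ => Comb.id
  | pol, .and X Y => Comb.andMono (mergeTm pol X) (mergeTm pol Y)
  | pol, .or X Y => Comb.orMono (mergeTm pol X) (mergeTm pol Y)
  | pol, .impl X Y => Comb.impMono (mergeTm (!pol) X) (mergeTm pol Y)
  | true, .box _ X | true, .dia _ X => Comb.sumMono (mergeTm true X)
  | false, .box _ X | false, .dia _ X => Comb.mono (mergeTm false X)

theorem isGround_mergeTm (pol : Bool) (X : AForm) : IsGround (mergeTm pol X) := by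
  induction X generalizing pol <;> cases pol <;>
    simp only [mergeTm, Comb.id, Comb.andMono, Comb.orMono, Comb.impMono, Comb.mono,
      Comb.sumMono, Comb.pair, Comb.comp, Comb.compose, c₀] <;>
    apply_rules [IsGround.app, IsGround.const, isGround_liftTm]

section Merge

variable (A : AForm) (rp1 rp2 : Nat → PrfTm) (rs1 rs2 : Nat → SatTm)

/-- The substitution `σ` on proof variables: `xₙ ↦ c·xₙ` for the negative `□_{4n+1} B` of `A`. -/
noncomputable def mergeSubstP (n : Nat) : PrfTm :=
  match A.scope (.box (4 * n + 1)) with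
  | some B => .app (mergeTm false B) (.pvar n)
  | none => .pvar n

noncomputable def mergeSubstS (k : Nat) : SatTm :=
  match A.scope (.dia (4 * k + 3)) with
  | some B => .prop (mergeTm false B) (.svar k)
  | none => .svar k

/-- The merged realisation on `□`: `r(m) = c·(r₁(m))σ + c·(r₂(m))σ` at positive `□ₘ C`. -/
noncomputable def mergeRealP (m : Nat) : PrfTm :=
  if m % 4 = 1 then .pvar (m / 4) else
  match A.scope (.box m) with
  | some C => .sum (.app (mergeTm true C) (substP (mergeSubstP A) (mergeSubstS A) (rp1 m)))
      (.app (mergeTm true C) (substP (mergeSubstP A) (mergeSubstS A) (rp2 m)))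
  | none => rp1 m

noncomputable def mergeRealS (m : Nat) : SatTm :=
  if m % 4 = 3 then .svar (m / 4) else
  match A.scope (.dia m) with
  | some C => .uni (.prop (mergeTm true C) (substS (mergeSubstP A) (mergeSubstS A) (rs1 m)))
      (.prop (mergeTm true C) (substS (mergeSubstP A) (mergeSubstS A) (rs2 m)))
  | none => rs1 m

theorem svarsP_mergeSubstP (n : Nat) : svarsP (mergeSubstP A n) = [] := by
  unfold mergeSubstP
  split <;> simp [svarsP, (isGround_mergeTm _ _).svarsP_eq_nil]

theorem svarsS_mergeSubstS_subset (k : Nat) : svarsS (mergeSubstS A k) ⊆ [k] := by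
  unfold mergeSubstS
  split <;> simp [svarsS, (isGround_mergeTm _ _).svarsP_eq_nil]

theorem pvarsS_mergeSubstS (k : Nat) : pvarsS (mergeSubstS A k) = [] := by
  unfold mergeSubstS
  split <;> simp [pvarsS, (isGround_mergeTm _ _).pvarsP_eq_nil]

variable {A}

theorem mergeSubstP_of_sub {B : AForm} {p : Bool} {n : Nat} (hA : (annList A).Nodup)
    (h : Sub p (.box (4 * n + 1) B) A) :
    mergeSubstP A n = .app (mergeTm false B) (.pvar n) := by
  rw [mergeSubstP, AForm.scope_box_eq hA h]

theorem mergeSubstS_of_sub {B : AForm} {p : Bool} {k : Nat} (hA : (annList A).Nodup)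
    (h : Sub p (.dia (4 * k + 3) B) A) :
    mergeSubstS A k = .prop (mergeTm false B) (.svar k) := by
  rw [mergeSubstS, AForm.scope_dia_eq hA h]

theorem mergeRealP_neg (n : Nat) : mergeRealP A rp1 rp2 (4 * n + 1) = .pvar n := by
  rw [mergeRealP, if_pos (by omega)]
  congr 1
  omega

theorem mergeRealS_neg (k : Nat) : mergeRealS A rs1 rs2 (4 * k + 3) = .svar k := by
  rw [mergeRealS, if_pos (by omega)]
  congr 1
  omega

theorem mergeRealP_pos {C : AForm} {m : Nat} (hA : ProperlyAnnotated A)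
    (h : Sub true (.box m C) A) :
    mergeRealP A rp1 rp2 m =
      .sum (.app (mergeTm true C) (substP (mergeSubstP A) (mergeSubstS A) (rp1 m)))
        (.app (mergeTm true C) (substP (mergeSubstP A) (mergeSubstS A) (rp2 m))) := by
  have hm := hA.box_mod h
  rw [mergeRealP, if_neg (by simp at hm; omega), AForm.scope_box_eq hA.1 h]

theorem mergeRealS_pos {C : AForm} {m : Nat} (hA : ProperlyAnnotated A)
    (h : Sub true (.dia m C) A) :
    mergeRealS A rs1 rs2 m =
      .uni (.prop (mergeTm true C) (substS (mergeSubstP A) (mergeSubstS A) (rs1 m)))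
        (.prop (mergeTm true C) (substS (mergeSubstP A) (mergeSubstS A) (rs2 m))) := by
  have hm := hA.dia_mod h
  rw [mergeRealS, if_neg (by simp at hm; omega), AForm.scope_dia_eq hA.1 h]

variable {hT h4 : Bool} {rp1 rp2 rs1 rs2}

theorem jproof_mergeTm (hA : ProperlyAnnotated A) (h1 : IsRealOn rp1 rs1 A)
    (h2 : IsRealOn rp2 rs2 A) {rpi : Nat → PrfTm} {rsi : Nat → SatTm}
    (hi : rpi = rp1 ∧ rsi = rs1 ∨ rpi = rp2 ∧ rsi = rs2) {X : AForm} {p : Bool}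
    (hX : Sub p X A) :
    JProof hT h4 (mergeTm p X) <| cond p
      ((substF (mergeSubstP A) (mergeSubstS A) (realise rpi rsi X)).impl
        (realise (mergeRealP A rp1 rp2) (mergeRealS A rs1 rs2) X))
      ((realise (mergeRealP A rp1 rp2) (mergeRealS A rs1 rs2) X).impl
        (substF (mergeSubstP A) (mergeSubstS A) (realise rpi rsi X))) := by
  have hri : IsRealOn rpi rsi A := by rcases hi with ⟨rfl, rfl⟩ | ⟨rfl, rfl⟩ <;> assumption
  induction X generalizing p with
  | bot | atom => cases p <;> exact JProof.imp_refl _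
  | and X Y ihX ihY =>
    have hX' : Sub p X A := by simpa using (Sub.andl .refl).trans hX
    have hY' : Sub p Y A := by simpa using (Sub.andr .refl).trans hX
    cases p <;> exact (ihX hX').and_mono (ihY hY')
  | or X Y ihX ihY =>
    have hX' : Sub p X A := by simpa using (Sub.orl .refl).trans hX
    have hY' : Sub p Y A := by simpa using (Sub.orr .refl).trans hX
    cases p <;> exact (ihX hX').or_mono (ihY hY')
  | impl X Y ihX ihY =>
    have hX' : Sub (!p) X A := by simpa using (Sub.impll .refl).trans hX
    have hY' : Sub p Y A := by simpa using (Sub.implr .refl).trans hX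
    cases p <;> exact (ihX hX').imp_mono (ihY hY')
  | box m C ih =>
    have hC : Sub p C A := by simpa using (Sub.box .refl).trans hX
    have hm := hA.box_mod hX
    cases p
    · obtain ⟨n, rfl⟩ : ∃ n, m = 4 * n + 1 := ⟨m / 4, by simp at hm; omega⟩
      have hmem : 4 * n + 1 ∈ annList A := hX.annList_subset (by simp [annList])
      simp only [realise, substF, mergeRealP_neg, hri.1 n hmem, substP,
        mergeSubstP_of_sub hA.1 hX]
      exact (ih hC).jst_mono _
    · simp only [realise, substF, mergeRealP_pos _ _ hA hX]
      rcases hi with ⟨rfl, rfl⟩ | ⟨rfl, rfl⟩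
      · exact (ih hC).jst_sum_left _ _
      · exact (ih hC).jst_sum_right _ _
  | dia m C ih =>
    have hC : Sub p C A := by simpa using (Sub.dia .refl).trans hX
    have hm := hA.dia_mod hX
    cases p
    · obtain ⟨k, rfl⟩ : ∃ k, m = 4 * k + 3 := ⟨m / 4, by simp at hm; omega⟩
      have hmem : 4 * k + 3 ∈ annList A := hX.annList_subset (by simp [annList])
      simp only [realise, substF, mergeRealS_neg, hri.2.1 k hmem, substS,
        mergeSubstS_of_sub hA.1 hX]
      exact (ih hC).sat_mono _
    · simp only [realise, substF, mergeRealS_pos _ _ hA hX]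
      rcases hi with ⟨rfl, rfl⟩ | ⟨rfl, rfl⟩
      · exact (ih hC).sat_uni_left _ _
      · exact (ih hC).sat_uni_right _ _

theorem exists_sub_of_mergeSubstP_ne {n : Nat} (h : mergeSubstP A n ≠ .pvar n) :
    ∃ B p, Sub p (.box (4 * n + 1) B) A ∧ mergeSubstP A n = .app (mergeTm false B) (.pvar n) := by
  rcases hB : A.scope (.box (4 * n + 1)) with _ | B
  · simp [mergeSubstP, hB] at h
  · obtain ⟨p, hp⟩ := AForm.exists_sub_of_scope_eq_some hB
    exact ⟨B, p, hp, by rw [mergeSubstP, hB]⟩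

theorem exists_sub_of_mergeSubstS_ne {k : Nat} (h : mergeSubstS A k ≠ .svar k) :
    ∃ B p, Sub p (.dia (4 * k + 3) B) A ∧ mergeSubstS A k = .prop (mergeTm false B) (.svar k) := by
  rcases hB : A.scope (.dia (4 * k + 3)) with _ | B
  · simp [mergeSubstS, hB] at h
  · obtain ⟨p, hp⟩ := AForm.exists_sub_of_scope_eq_some hB
    exact ⟨B, p, hp, by rw [mergeSubstS, hB]⟩

theorem mem_svarsP_of_mem_mergeRealP {m x : Nat} (hx : x ∈ svarsP (mergeRealP A rp1 rp2 m)) :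
    x ∈ svarsP (rp1 m) ∨ x ∈ svarsP (rp2 m) := by
  unfold mergeRealP at hx
  split_ifs at hx
  · simp [svarsP] at hx
  split at hx
  · simp only [svarsP, (isGround_mergeTm _ _).svarsP_eq_nil, List.nil_append,
      List.mem_append] at hx
    exact hx.imp (mem_svarsP_of_mem_substP (svarsP_mergeSubstP A) (svarsS_mergeSubstS_subset A) _)
      (mem_svarsP_of_mem_substP (svarsP_mergeSubstP A) (svarsS_mergeSubstS_subset A) _)
  · exact .inl hx

theorem mem_svarsS_of_mem_mergeRealS (h1 : IsRealOn rp1 rs1 A) {m x : Nat} (hm : m ∈ annList A)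
    (hx : x ∈ svarsS (mergeRealS A rs1 rs2 m)) : x ∈ svarsS (rs1 m) ∨ x ∈ svarsS (rs2 m) := by
  unfold mergeRealS at hx
  split_ifs at hx with hm3
  · obtain ⟨k, rfl⟩ : ∃ k, m = 4 * k + 3 := ⟨m / 4, by omega⟩
    rw [show (4 * k + 3) / 4 = k by omega] at hx
    exact .inl (h1.2.1 k hm ▸ hx)
  split at hx
  · simp only [svarsS, (isGround_mergeTm _ _).svarsP_eq_nil, List.nil_append,
      List.mem_append] at hx
    exact hx.imp (mem_svarsS_of_mem_substS (svarsP_mergeSubstP A) (svarsS_mergeSubstS_subset A) _)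
      (mem_svarsS_of_mem_substS (svarsP_mergeSubstP A) (svarsS_mergeSubstS_subset A) _)
  · exact .inl hx

theorem isRealOn_merge (h1 : IsRealOn rp1 rs1 A) (h2 : IsRealOn rp2 rs2 A) :
    IsRealOn (mergeRealP A rp1 rp2) (mergeRealS A rs1 rs2) A := by
  refine ⟨fun n _ => mergeRealP_neg _ _ n, fun k _ => mergeRealS_neg _ _ k, ?_⟩
  intro p k B hB hk
  have hBA := ((Sub.dia .refl).trans hB).annList_subset
  exact (mem_svarsF_realise_of_mem (fun _ _ _ => mem_svarsP_of_mem_mergeRealP)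
    (fun m hm _ => mem_svarsS_of_mem_mergeRealS h1 (hBA hm)) hk).elim
    (h1.2.2 p k B hB) (h2.2.2 p k B hB)

theorem mem_annList_of_mergeSubstP_ne {n : Nat} (h : mergeSubstP A n ≠ .pvar n) :
    4 * n + 1 ∈ annList A := by
  obtain ⟨B, p, hB, -⟩ := exists_sub_of_mergeSubstP_ne h
  exact hB.annList_subset (by simp [annList])

theorem mem_annList_of_mergeSubstS_ne {k : Nat} (h : mergeSubstS A k ≠ .svar k) :
    4 * k + 3 ∈ annList A := by
  obtain ⟨B, p, hB, -⟩ := exists_sub_of_mergeSubstS_ne h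
  exact hB.annList_subset (by simp [annList])

theorem pvarsP_mergeSubstP_subset (h1 : IsRealOn rp1 rs1 A) {n : Nat}
    (h : mergeSubstP A n ≠ .pvar n) : pvarsP (mergeSubstP A n) ⊆ pvarsF (realise rp1 rs1 A) := by
  obtain ⟨B, p, hB, heq⟩ := exists_sub_of_mergeSubstP_ne h
  have hmem : 4 * n + 1 ∈ annList A := hB.annList_subset (by simp [annList])
  rw [heq]
  simpa [pvarsP, (isGround_mergeTm _ _).pvarsP_eq_nil] using
    hB.pvarsF_realise_subset rp1 rs1 (by simp [realise, pvarsF, pvarsP, h1.1 n hmem])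

theorem svarsS_mergeSubstS_subset_svarsF (h1 : IsRealOn rp1 rs1 A) {k : Nat}
    (h : mergeSubstS A k ≠ .svar k) : svarsS (mergeSubstS A k) ⊆ svarsF (realise rp1 rs1 A) := by
  obtain ⟨B, p, hB, heq⟩ := exists_sub_of_mergeSubstS_ne h
  have hmem : 4 * k + 3 ∈ annList A := hB.annList_subset (by simp [annList])
  rw [heq]
  simpa [svarsS, (isGround_mergeTm _ _).svarsP_eq_nil] using
    hB.svarsF_realise_subset rp1 rs1 (by simp [realise, svarsF, svarsS, h1.2.1 k hmem])

end Merge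

/-- Realisation merging. -/
theorem realisation_merging (hT h4 : Bool) (A : AForm) (hA : ProperlyAnnotated A)
    (rp1 rp2 : Nat → PrfTm) (rs1 rs2 : Nat → SatTm)
    (h1 : IsRealOn rp1 rs1 A) (h2 : IsRealOn rp2 rs2 A) :
    ∃ (rp : Nat → PrfTm) (rs : Nat → SatTm) (sp : Nat → PrfTm) (ss : Nat → SatTm),
      IsRealOn rp rs A ∧
      -- the domain of the substitution is contained in the negatively-annotated variables of A
      (∀ n : Nat, sp n ≠ PrfTm.pvar n → (4 * n + 1) ∈ annList A) ∧
      (∀ n : Nat, ss n ≠ SatTm.svar n → (4 * n + 3) ∈ annList A) ∧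
      -- the substitution introduces no new variables
      (∀ n : Nat, sp n ≠ PrfTm.pvar n →
        (∀ m ∈ pvarsP (sp n), m ∈ pvarsF (realise rp1 rs1 A) ++ pvarsF (realise rp2 rs2 A)) ∧
        (∀ m ∈ svarsP (sp n), m ∈ svarsF (realise rp1 rs1 A) ++ svarsF (realise rp2 rs2 A))) ∧
      (∀ n : Nat, ss n ≠ SatTm.svar n →
        (∀ m ∈ pvarsS (ss n), m ∈ pvarsF (realise rp1 rs1 A) ++ pvarsF (realise rp2 rs2 A)) ∧
        (∀ m ∈ svarsS (ss n), m ∈ svarsF (realise rp1 rs1 A) ++ svarsF (realise rp2 rs2 A))) ∧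
      -- (1) positive subformulas
      (∀ X : AForm, Sub true X A →
        JThm hT h4 ((substF sp ss (realise rp1 rs1 X)).impl
          ((substF sp ss (realise rp2 rs2 X)).impl (realise rp rs X)))) ∧
      -- (2) negative subformulas
      (∀ X : AForm, Sub false X A →
        JThm hT h4 ((realise rp rs X).impl (substF sp ss (realise rp1 rs1 X))) ∧
        JThm hT h4 ((realise rp rs X).impl (substF sp ss (realise rp2 rs2 X)))) := by
  refine ⟨mergeRealP A rp1 rp2, mergeRealS A rs1 rs2, mergeSubstP A, mergeSubstS A,
    isRealOn_merge h1 h2, fun _ => mem_annList_of_mergeSubstP_ne,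
    fun _ => mem_annList_of_mergeSubstS_ne, ?_, ?_, ?_, ?_⟩
  · intro n h
    refine ⟨fun m hm => List.mem_append_left _ (pvarsP_mergeSubstP_subset h1 h hm), ?_⟩
    simp [svarsP_mergeSubstP]
  · intro k h
    refine ⟨by simp [pvarsS_mergeSubstS], fun m hm => ?_⟩
    exact List.mem_append_left _ (svarsS_mergeSubstS_subset_svarsF h1 h hm)
  · intro X hX
    exact ((JProof.ax .ax1).comp (jproof_mergeTm hA h1 h2 (.inl ⟨rfl, rfl⟩) hX)).thm
  · intro X hX
    exact ⟨(jproof_mergeTm hA h1 h2 (.inl ⟨rfl, rfl⟩) hX).thm,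
      (jproof_mergeTm hA h1 h2 (.inr ⟨rfl, rfl⟩) hX).thm⟩

end JIKPaper
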